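/- There exists a function f in the Bloch space 𝓑 and constants c > 0, η ∈ (0,1) and δ > 0 such that m(G_c ∩ Δ(α,η)) ≥ δ m(Δ(α,η)) for every α ∈ 𝔻, where G_c = {z ∈ 𝔻 : |f′(z)|(1−|z|) > c}. -/

import Mathlib

open MeasureTheory Complex Set
open scoped Real ENNReal

noncomputable section

/-- The open unit disc in `ℂ`. -/
def unitDisc : Set ℂ := Metric.ball 0 1

/-- The normalized area Lebesgue measure on `ℂ`. -/
def mA : Measure ℂ := (ENNReal.ofReal Real.pi)⁻¹ • (volume : Measure ℂ)

/-- The cone-like region `Γ_β(ξ) = {|z| < β} ∪ ⋃_{|z|<β} [z, ξ)`. -/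
def coneRegion (β : ℝ) (ξ : ℂ) : Set ℂ :=
  {z : ℂ | ‖z‖ < β} ∪
    ⋃ z ∈ {w : ℂ | ‖w‖ < β},
      {w : ℂ | ∃ t : ℝ, 0 ≤ t ∧ t < 1 ∧ w = (1 - t) * z + t * ξ}

/-- The pseudohyperbolic disc `Δ(α,η)`. -/
def pDisc (α : ℂ) (η : ℝ) : Set ℂ :=
  {z ∈ unitDisc | ‖(α - z) / (1 - (starRingEnd ℂ) α * z)‖ < η}

/-- The Euclidean disc `Δ_η(α) = {z : |z - α| < η(1-|α|)}`. -/
def eDisc (η : ℝ) (α : ℂ) : Set ℂ :=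
  {z : ℂ | ‖z - α‖ < η * (1 - ‖α‖)}

/-- The tent-space expression of `f` with aperture `β`, restricted to a set `G`:
`(∫_𝕋 (∫_{Γ_β(ξ) ∩ G} |f(z)|^p dm(z)/(1-|z|))^{q/p} |dξ|)^{1/q}`. -/
def tentNormOn (p q β : ℝ) (G : Set ℂ) (f : ℂ → ℂ) : ℝ≥0∞ :=
  (∫⁻ θ in Set.Ioo 0 (2 * Real.pi),
      (∫⁻ z in coneRegion β (Complex.exp (θ * Complex.I)) ∩ G,
          ENNReal.ofReal (‖f z‖ ^ p / (1 - ‖z‖)) ∂mA) ^ (q / p))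
    ^ (1 / q)

/-- The tent space (quasi-)norm `‖f‖_{T_p^q}` (aperture `1/2`). -/
def tentNorm (p q : ℝ) (f : ℂ → ℂ) : ℝ≥0∞ := tentNormOn p q (1/2) Set.univ f

/-- `ρ_{p,q}(f) = ((1/2π)∫_0^{2π} (∫_0^1 |f(re^{iθ})|^p dr)^{q/p} dθ)^{1/q}`. -/
def rho (p q : ℝ) (f : ℂ → ℂ) : ℝ≥0∞ :=
  ((ENNReal.ofReal (2 * Real.pi))⁻¹ *
      ∫⁻ θ in Set.Ioo 0 (2 * Real.pi),
        (∫⁻ r in Set.Ioo (0:ℝ) 1,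
            ENNReal.ofReal (‖f ((r : ℂ) * Complex.exp (θ * Complex.I))‖ ^ p))
          ^ (q / p)) ^ (1 / q)

/-- Membership in `RM(p,q)`. -/
def memRM (p q : ℝ) (f : ℂ → ℂ) : Prop :=
  DifferentiableOn ℂ f unitDisc ∧ rho p q f < ⊤

/-- The Pommerenke integration operator `T_g f(z) = ∫_0^z f(ζ) g'(ζ) dζ`. -/
def Tg (g f : ℂ → ℂ) (z : ℂ) : ℂ :=
  z * ∫ t in Set.Ioo (0:ℝ) 1, f ((t : ℂ) * z) * deriv g ((t : ℂ) * z)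

/-- The companion operator `S_g f(z) = ∫_0^z f'(ζ) g(ζ) dζ`. -/
def Sg (g f : ℂ → ℂ) (z : ℂ) : ℂ :=
  z * ∫ t in Set.Ioo (0:ℝ) 1, deriv f ((t : ℂ) * z) * g ((t : ℂ) * z)

/-- Membership in the Bloch space `𝓑`. -/
def memBloch (g : ℂ → ℂ) : Prop :=
  DifferentiableOn ℂ g unitDisc ∧
    ∃ M : ℝ, ∀ z ∈ unitDisc, ‖deriv g z‖ * (1 - ‖z‖ ^ 2) ≤ M

/-- Membership in `H^∞`. -/
def memHinf (g : ℂ → ℂ) : Prop :=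
  DifferentiableOn ℂ g unitDisc ∧ ∃ M : ℝ, ∀ z ∈ unitDisc, ‖g z‖ ≤ M

/-- The set `E_λ(α) = {z ∈ Δ_η(α) : |f(z)|^p ≥ λ |f(α)|^p}`. -/
def Eset (p η : ℝ) (f : ℂ → ℂ) (lam : ℝ) (α : ℂ) : Set ℂ :=
  {z ∈ eDisc η α | lam * ‖f α‖ ^ p ≤ ‖f z‖ ^ p}

/-- The average `B_λ f(α) = (1/m(E_λ(α))) ∫_{E_λ(α)} |f(z)|^p dm(z)` (in `ℝ≥0∞`). -/
def Bavg (p η : ℝ) (f : ℂ → ℂ) (lam : ℝ) (α : ℂ) : ℝ≥0∞ :=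
  (∫⁻ z in Eset p η f lam α, ENNReal.ofReal (‖f z‖ ^ p) ∂mA) /
    mA (Eset p η f lam α)

/-- The derivative variant `E_λ(α) = {z ∈ Δ_η(α) : (1-|z|)^p |f'(z)|^p ≥ λ (1-|α|)^p |f'(α)|^p}`. -/
def EsetD (p η : ℝ) (f : ℂ → ℂ) (lam : ℝ) (α : ℂ) : Set ℂ :=
  {z ∈ eDisc η α |
    lam * ((1 - ‖α‖) ^ p * ‖deriv f α‖ ^ p) ≤
      (1 - ‖z‖) ^ p * ‖deriv f z‖ ^ p}

/-- The derivative variant of `B_λ f(α)` (in `ℝ≥0∞`). -/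
def BavgD (p η : ℝ) (f : ℂ → ℂ) (lam : ℝ) (α : ℂ) : ℝ≥0∞ :=
  (∫⁻ z in EsetD p η f lam α,
      ENNReal.ofReal (‖deriv f z‖ ^ p * (1 - ‖z‖) ^ p) ∂mA) /
    mA (EsetD p η f lam α)

/-- The test functions `f_α(z) = (1-|α|²)^{γ-1/p-1/q} / (1-ᾱz)^γ`. -/
def testFun (p q γ : ℝ) (α z : ℂ) : ℂ :=
  (((1 - ‖α‖ ^ 2) ^ (γ - 1/p - 1/q) : ℝ) : ℂ) /
    (1 - (starRingEnd ℂ) α * z) ^ (γ : ℂ)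

/-!
The Hadamard gap series `f z = ∑ z ^ 100 ^ n` works. Comparing `100 ^ n * r ^ (100 ^ n - 1)`
with the block `∑_{100 ^ (n-1) ≤ k < 100 ^ n} r ^ k` of the geometric series gives
`|f'(z)| ≲ (1 - |z|)⁻¹`, so `f` is a Bloch function. On the annulus
`1 - 100⁻ⁿ < |z| < 1 - 100⁻ⁿ / 2` the `n`-th term of `f'` has modulus at least `100ⁿ / e`, while
the earlier terms add up to at most `100ⁿ / 99` and so do the later ones; hence
`|f'(z)| (1 - |z|) > 1/8` there. Since `Δ(α, η)` lies between the Euclidean discs about `α` of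
radii `η (1 - |α|)` and `2η (1 - |α|) / (1 - η)`, for `η = 999/1000` it contains a Euclidean disc
of radius comparable to `1 - |α|` inside one of these annuli.
-/

lemma mem_unitDisc {z : ℂ} : z ∈ unitDisc ↔ ‖z‖ < 1 := mem_ball_zero_iff

lemma mA_ball (a : ℂ) {r : ℝ} (hr : 0 ≤ r) : mA (Metric.ball a r) = ENNReal.ofReal (r ^ 2) := by
  have hpi : ENNReal.ofReal π = (NNReal.pi : ℝ≥0∞) := by
    rw [← NNReal.coe_real_pi, ENNReal.ofReal_coe_nnreal]
  rw [mA, Measure.smul_apply, smul_eq_mul, Complex.volume_ball, hpi, mul_comm (_ ^ 2),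
    ← mul_assoc, ENNReal.inv_mul_cancel (by simp [NNReal.pi_ne_zero]) ENNReal.coe_ne_top,
    one_mul, ENNReal.ofReal_pow hr]

section PseudohyperbolicDisc

variable {α z : ℂ} {η : ℝ}

lemma one_sub_norm_le_norm_one_sub_conj_mul (hz : ‖z‖ ≤ 1) :
    1 - ‖α‖ ≤ ‖1 - starRingEnd ℂ α * z‖ := by
  have h : ‖starRingEnd ℂ α * z‖ ≤ ‖α‖ := by
    rw [norm_mul, Complex.norm_conj]
    exact mul_le_of_le_one_right (norm_nonneg α) hz
  have := norm_sub_norm_le (1 : ℂ) (starRingEnd ℂ α * z)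
  rw [norm_one] at this
  linarith

lemma norm_one_sub_conj_mul_le (hα : ‖α‖ ≤ 1) :
    ‖1 - starRingEnd ℂ α * z‖ ≤ (1 - ‖α‖ ^ 2) + ‖α‖ * ‖α - z‖ := by
  have hsplit : 1 - starRingEnd ℂ α * z
      = ((1 - ‖α‖ ^ 2 : ℝ) : ℂ) + starRingEnd ℂ α * (α - z) := by
    push_cast
    rw [← Complex.conj_mul']
    ring
  have h1 : 0 ≤ 1 - ‖α‖ ^ 2 := by nlinarith [norm_nonneg α]
  rw [hsplit]
  refine (norm_add_le _ _).trans_eq ?_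
  rw [Complex.norm_real, Real.norm_of_nonneg h1, norm_mul, Complex.norm_conj]

lemma ball_subset_pDisc (hα : ‖α‖ < 1) (hη : η ≤ 1) :
    Metric.ball α (η * (1 - ‖α‖)) ⊆ pDisc α η := by
  intro z hz
  rw [Metric.mem_ball, dist_eq_norm] at hz
  have hαz : ‖α - z‖ = ‖z - α‖ := norm_sub_rev α z
  have hz1 : ‖z‖ < 1 := by
    have := norm_le_norm_add_norm_sub' z α
    nlinarith [norm_nonneg (z - α)]
  have hden := one_sub_norm_le_norm_one_sub_conj_mul (α := α) hz1.le
  refine ⟨mem_unitDisc.mpr hz1, ?_⟩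
  rw [norm_div, div_lt_iff₀ (by linarith), hαz]
  nlinarith [norm_nonneg (z - α)]

lemma pDisc_subset_ball (hα : ‖α‖ < 1) (hη : η < 1) :
    pDisc α η ⊆ Metric.ball α (2 * η / (1 - η) * (1 - ‖α‖)) := by
  rintro z ⟨hz1, hz⟩
  rw [mem_unitDisc] at hz1
  have hden := one_sub_norm_le_norm_one_sub_conj_mul (α := α) hz1.le
  have hnum := norm_one_sub_conj_mul_le (z := z) hα.le
  rw [norm_div, div_lt_iff₀ (by linarith)] at hz
  rw [Metric.mem_ball, dist_eq_norm, ← norm_sub_rev, div_mul_eq_mul_div,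
    lt_div_iff₀ (by linarith)]
  have hη0 : 0 < η := by
    by_contra! h
    nlinarith [norm_nonneg (α - z)]
  have hD : ‖1 - starRingEnd ℂ α * z‖ ≤ 2 * (1 - ‖α‖) + ‖α - z‖ := by
    nlinarith [norm_nonneg (α - z), norm_nonneg α]
  nlinarith [mul_le_mul_of_nonneg_left hD hη0.le]

end PseudohyperbolicDisc

lemma exists_ball_subset_annulus_inter_pDisc {α : ℂ} (hα : ‖α‖ < 1) {p : ℝ}
    (hp : p < 1 - ‖α‖) (hp' : 1 - ‖α‖ ≤ 100 * p) :
    ∃ z₀, Metric.ball z₀ (p / 4) ⊆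
      {z : ℂ | 1 - p < ‖z‖ ∧ ‖z‖ < 1 - p / 2} ∩ pDisc α (999 / 1000) := by
  set u := exp (arg α * I)
  have hu : ‖u‖ = 1 := norm_exp_ofReal_mul_I _
  have hαu : α = (‖α‖ : ℂ) * u := (norm_mul_exp_arg_mul_I α).symm
  have hα0 := norm_nonneg α
  have hp0 : 0 < p := by linarith
  have hnorm : ∀ t : ℝ, 0 ≤ t → ‖(t : ℂ) * u‖ = t := fun t ht => by
    rw [norm_mul, hu, mul_one, Complex.norm_real, Real.norm_of_nonneg ht]
  refine ⟨((1 - 3 * p / 4 : ℝ) : ℂ) * u, fun z hz => ?_⟩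
  rw [Metric.mem_ball, dist_eq_norm] at hz
  have hz₀ : ‖((1 - 3 * p / 4 : ℝ) : ℂ) * u‖ = 1 - 3 * p / 4 := hnorm _ (by linarith)
  have hz₀α : ‖((1 - 3 * p / 4 : ℝ) : ℂ) * u - α‖ = 1 - ‖α‖ - 3 * p / 4 := by
    rw [← hnorm (1 - ‖α‖ - 3 * p / 4) (by linarith)]
    congr 1
    push_cast
    linear_combination -hαu
  have h1 := norm_sub_norm_le z (((1 - 3 * p / 4 : ℝ) : ℂ) * u)
  have h2 := norm_sub_norm_le (((1 - 3 * p / 4 : ℝ) : ℂ) * u) z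
  rw [norm_sub_rev] at h2
  refine ⟨⟨by linarith, by linarith⟩, ball_subset_pDisc hα (by norm_num) ?_⟩
  rw [Metric.mem_ball, dist_eq_norm]
  have := norm_sub_le_norm_sub_add_norm_sub z (((1 - 3 * p / 4 : ℝ) : ℂ) * u) α
  linarith

def gapSeries (z : ℂ) : ℂ := ∑' n : ℕ, z ^ 100 ^ n

def gapDerivTerm (z : ℂ) (n : ℕ) : ℂ := ((100 ^ n : ℕ) : ℂ) * z ^ (100 ^ n - 1)

lemma norm_gapDerivTerm (z : ℂ) (n : ℕ) : ‖gapDerivTerm z n‖ = 100 ^ n * ‖z‖ ^ (100 ^ n - 1) := by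
  rw [gapDerivTerm, norm_mul, norm_pow, Complex.norm_natCast]
  push_cast
  rfl

section Majorant

variable {r : ℝ}

lemma pow_succ_mul_pow_le_sum_Ico (hr0 : 0 ≤ r) (hr1 : r ≤ 1) (i : ℕ) :
    (100 : ℝ) ^ (i + 1) * r ^ (100 ^ (i + 1) - 1) ≤
      100 / 99 * ∑ k ∈ Finset.Ico (100 ^ i) (100 ^ (i + 1)), r ^ k := by
  have hle : 100 ^ i ≤ 100 ^ (i + 1) := Nat.pow_le_pow_right (by norm_num) (by omega)
  have hmin : ∀ k ∈ Finset.Ico (100 ^ i) (100 ^ (i + 1)), r ^ (100 ^ (i + 1) - 1) ≤ r ^ k :=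
    fun k hk => pow_le_pow_of_le_one hr0 hr1 (by rw [Finset.mem_Ico] at hk; omega)
  have hcard := Finset.card_nsmul_le_sum _ _ _ hmin
  rw [Nat.card_Ico, nsmul_eq_mul, Nat.cast_sub hle] at hcard
  push_cast at hcard
  calc (100 : ℝ) ^ (i + 1) * r ^ (100 ^ (i + 1) - 1)
      = 100 / 99 * (((100 : ℝ) ^ (i + 1) - 100 ^ i) * r ^ (100 ^ (i + 1) - 1)) := by ring
    _ ≤ _ := by gcongr

lemma sum_range_pow_mul_pow_le (hr0 : 0 ≤ r) (hr1 : r < 1) (N : ℕ) :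
    ∑ n ∈ Finset.range N, (100 : ℝ) ^ n * r ^ (100 ^ n - 1) ≤ 1 + 100 / 99 * (1 - r)⁻¹ := by
  have hinv : 0 ≤ (1 - r)⁻¹ := inv_nonneg.mpr (by linarith)
  rcases N with _ | N
  · simp only [Finset.range_zero, Finset.sum_empty]
    positivity
  rw [Finset.sum_range_succ', pow_zero, one_mul, pow_zero, Nat.sub_self, pow_zero, add_comm]
  gcongr
  have hblocks : ∑ i ∈ Finset.range N, ∑ k ∈ Finset.Ico (100 ^ i) (100 ^ (i + 1)), r ^ k
      = ∑ k ∈ Finset.Ico 1 (100 ^ N), r ^ k := by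
    induction N with
    | zero => simp
    | succ N ih =>
      rw [Finset.sum_range_succ, ih, Finset.sum_Ico_consecutive _ (Nat.one_le_pow _ _ (by norm_num))
        (Nat.pow_le_pow_right (by norm_num) (by omega))]
  calc ∑ i ∈ Finset.range N, (100 : ℝ) ^ (i + 1) * r ^ (100 ^ (i + 1) - 1)
      ≤ ∑ i ∈ Finset.range N, 100 / 99 * ∑ k ∈ Finset.Ico (100 ^ i) (100 ^ (i + 1)), r ^ k :=
        Finset.sum_le_sum fun i _ => pow_succ_mul_pow_le_sum_Ico hr0 hr1.le i
    _ = 100 / 99 * ∑ k ∈ Finset.Ico 1 (100 ^ N), r ^ k := by rw [← Finset.mul_sum, hblocks]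
    _ ≤ 100 / 99 * (1 - r)⁻¹ := by
        gcongr
        refine (geom_sum_Ico_le_of_lt_one hr0 hr1).trans ?_
        rw [div_eq_mul_inv, pow_one]
        exact mul_le_of_le_one_left hinv hr1.le

lemma summable_pow_mul_pow (hr0 : 0 ≤ r) (hr1 : r < 1) :
    Summable fun n : ℕ => (100 : ℝ) ^ n * r ^ (100 ^ n - 1) :=
  summable_of_sum_range_le (fun _ => by positivity) (sum_range_pow_mul_pow_le hr0 hr1)

lemma tsum_pow_mul_pow_le (hr0 : 0 ≤ r) (hr1 : r < 1) :
    ∑' n : ℕ, (100 : ℝ) ^ n * r ^ (100 ^ n - 1) ≤ 1 + 100 / 99 * (1 - r)⁻¹ :=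
  Real.tsum_le_of_sum_range_le (fun _ => by positivity) (sum_range_pow_mul_pow_le hr0 hr1)

end Majorant

section GapSeries

variable {z : ℂ}

lemma summable_norm_gapDerivTerm (hz : ‖z‖ < 1) : Summable fun n => ‖gapDerivTerm z n‖ := by
  simpa only [norm_gapDerivTerm] using summable_pow_mul_pow (norm_nonneg z) hz

lemma summable_norm_gapDerivTerm_add (hz : ‖z‖ < 1) (k : ℕ) :
    Summable fun i => ‖gapDerivTerm z (i + k)‖ :=
  (summable_nat_add_iff (f := fun n => ‖gapDerivTerm z n‖) k).mpr (summable_norm_gapDerivTerm hz)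

lemma norm_tsum_gapDerivTerm_le (hz : ‖z‖ < 1) :
    ‖∑' n, gapDerivTerm z n‖ ≤ 1 + 100 / 99 * (1 - ‖z‖)⁻¹ :=
  (norm_tsum_le_tsum_norm (summable_norm_gapDerivTerm hz)).trans
    (by simpa only [norm_gapDerivTerm] using tsum_pow_mul_pow_le (norm_nonneg z) hz)

lemma hasDerivAt_gapSeries (hz : ‖z‖ < 1) : HasDerivAt gapSeries (∑' n, gapDerivTerm z n) z := by
  obtain ⟨R, hzR, hR1⟩ := exists_between hz
  have hR0 : 0 < R := (norm_nonneg z).trans_lt hzR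
  refine hasDerivAt_tsum_of_isPreconnected (summable_pow_mul_pow hR0.le hR1)
    Metric.isOpen_ball (convex_ball (0 : ℂ) R).isPreconnected
    (fun n y _ => hasDerivAt_pow (100 ^ n) y) (fun n y hy => ?_) (Metric.mem_ball_self hR0)
    ?_ (mem_ball_zero_iff.mpr hzR)
  · rw [← gapDerivTerm, norm_gapDerivTerm]
    gcongr
    exact (mem_ball_zero_iff.mp hy).le
  · simp only [zero_pow (pow_ne_zero _ (by norm_num : (100 : ℕ) ≠ 0))]
    exact summable_zero

lemma deriv_gapSeries (hz : ‖z‖ < 1) : deriv gapSeries z = ∑' n, gapDerivTerm z n :=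
  (hasDerivAt_gapSeries hz).deriv

lemma memBloch_gapSeries : memBloch gapSeries := by
  refine ⟨fun z hz => (hasDerivAt_gapSeries (mem_unitDisc.mp hz)).differentiableAt
    |>.differentiableWithinAt, 4, fun z hz => ?_⟩
  have hz1 := mem_unitDisc.mp hz
  have hz0 := norm_nonneg z
  have hfactor : (1 - ‖z‖)⁻¹ * (1 - ‖z‖ ^ 2) = 1 + ‖z‖ := by
    field_simp [(by linarith : (1 : ℝ) - ‖z‖ ≠ 0)]
    ring
  calc ‖deriv gapSeries z‖ * (1 - ‖z‖ ^ 2)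
      ≤ (1 + 100 / 99 * (1 - ‖z‖)⁻¹) * (1 - ‖z‖ ^ 2) := by
        rw [deriv_gapSeries hz1]
        gcongr
        · nlinarith
        · exact norm_tsum_gapDerivTerm_le hz1
    _ = (1 - ‖z‖ ^ 2) + 100 / 99 * (1 + ‖z‖) := by rw [add_mul, mul_assoc, hfactor, one_mul]
    _ ≤ 4 := by nlinarith

end GapSeries

lemma inv_exp_one_le_one_sub_inv_pow (n : ℕ) : (Real.exp 1)⁻¹ ≤ (1 - ((n : ℝ) + 1)⁻¹) ^ n := by
  have hpow : (1 - ((n : ℝ) + 1)⁻¹) ^ n = ((1 + (n : ℝ)⁻¹) ^ n)⁻¹ := by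
    rcases Nat.eq_zero_or_pos n with rfl | hn
    · simp
    · rw [← inv_pow]
      congr 1
      field_simp
      ring
  rw [hpow]
  exact inv_anti₀ (by positivity) Real.one_add_inv_pow_le_exp

section LowerBound

variable {n : ℕ} {z : ℂ}

lemma div_three_le_norm_gapDerivTerm (hz : 1 - ((100 : ℝ) ^ n)⁻¹ ≤ ‖z‖) :
    (100 : ℝ) ^ n / 3 ≤ ‖gapDerivTerm z n‖ := by
  have hN : ((100 ^ n - 1 : ℕ) : ℝ) + 1 = 100 ^ n := by
    rw [Nat.cast_sub (Nat.one_le_pow _ _ (by norm_num))]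
    push_cast
    ring
  have hbase : (Real.exp 1)⁻¹ ≤ ‖z‖ ^ (100 ^ n - 1) := by
    refine (inv_exp_one_le_one_sub_inv_pow _).trans (pow_le_pow_left₀ ?_ (hN ▸ hz) _)
    rw [hN, sub_nonneg]
    exact inv_le_one_of_one_le₀ (one_le_pow₀ (by norm_num))
  have he : (3 : ℝ)⁻¹ ≤ (Real.exp 1)⁻¹ := inv_anti₀ (by positivity) Real.exp_one_lt_three.le
  rw [norm_gapDerivTerm, div_eq_mul_inv]
  gcongr
  exact he.trans hbase

lemma sum_range_norm_gapDerivTerm_le (hz : ‖z‖ ≤ 1) :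
    ∑ k ∈ Finset.range n, ‖gapDerivTerm z k‖ ≤ (100 : ℝ) ^ n / 99 := by
  calc ∑ k ∈ Finset.range n, ‖gapDerivTerm z k‖ ≤ ∑ k ∈ Finset.range n, (100 : ℝ) ^ k := by
        gcongr with k
        rw [norm_gapDerivTerm]
        exact mul_le_of_le_one_right (by positivity) (pow_le_one₀ (norm_nonneg z) hz)
    _ ≤ (100 : ℝ) ^ n / 99 := by
        rw [geom_sum_eq (by norm_num)]
        gcongr <;> norm_num

/-- `‖z‖ ≤ 1 - 100⁻ⁿ / 2 ≤ exp (-100⁻ⁿ / 2)` bounds `‖z‖ ^ (100 ^ (i + n + 1) - 1)` by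
`exp (-25 * 100 ^ i)`, and `x ^ 4 / 24 ≤ exp x` turns this into geometric decay. -/
lemma norm_gapDerivTerm_add_le (hz : ‖z‖ ≤ 1 - ((100 : ℝ) ^ n)⁻¹ / 2) (i : ℕ) :
    ‖gapDerivTerm z (i + (n + 1))‖ ≤ (100 : ℝ) ^ n / 100 * (1 / 100) ^ i := by
  set N : ℝ := 100 ^ n
  set y : ℝ := 100 ^ i
  have hN : 1 ≤ N := one_le_pow₀ (by norm_num)
  have hy : 1 ≤ y := one_le_pow₀ (by norm_num)
  have hK : (100 : ℝ) ^ (i + (n + 1)) = 100 * N * y := by ring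
  have hx : 25 * y ≤ ((100 ^ (i + (n + 1)) - 1 : ℕ) : ℝ) * (2 * N)⁻¹ := by
    rw [Nat.cast_sub (Nat.one_le_pow _ _ (by norm_num))]
    push_cast
    rw [hK, le_mul_inv_iff₀ (by positivity)]
    nlinarith
  set x : ℝ := ((100 ^ (i + (n + 1)) - 1 : ℕ) : ℝ) * (2 * N)⁻¹
  have hpow : ‖z‖ ^ (100 ^ (i + (n + 1)) - 1) ≤ (Real.exp x)⁻¹ := by
    calc ‖z‖ ^ (100 ^ (i + (n + 1)) - 1)
        ≤ Real.exp (-(2 * N)⁻¹) ^ (100 ^ (i + (n + 1)) - 1) := by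
          refine pow_le_pow_left₀ (norm_nonneg z) (hz.trans ?_) _
          have := Real.add_one_le_exp (-(2 * N)⁻¹)
          rw [mul_inv] at this ⊢
          linarith
      _ = (Real.exp x)⁻¹ := by rw [← Real.exp_nat_mul, ← Real.exp_neg, mul_neg]
  have hexp : (25 * y) ^ 4 / 24 ≤ Real.exp x := by
    have := Real.pow_div_factorial_le_exp x (by positivity) 4
    rw [show (Nat.factorial 4 : ℝ) = 24 by norm_num [Nat.factorial]] at this
    exact le_trans (by gcongr) this
  have hy4 : y ^ 2 ≤ y ^ 4 := pow_le_pow_right₀ hy (by norm_num)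
  rw [norm_gapDerivTerm, hK]
  calc 100 * N * y * ‖z‖ ^ (100 ^ (i + (n + 1)) - 1)
      ≤ 100 * N * y * ((25 * y) ^ 4 / 24)⁻¹ := by
        gcongr
        exact hpow.trans (inv_anti₀ (by positivity) hexp)
    _ ≤ N / (100 * y) := by
        rw [inv_div, mul_div_assoc', div_le_div_iff₀ (by positivity) (by positivity)]
        nlinarith [mul_le_mul_of_nonneg_left hy4 (by positivity : (0 : ℝ) ≤ N)]
    _ = N / 100 * (1 / 100) ^ i := by
        rw [one_div_pow, div_mul_div_comm, mul_one]

lemma tsum_norm_gapDerivTerm_add_le (hz : ‖z‖ ≤ 1 - ((100 : ℝ) ^ n)⁻¹ / 2) :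
    ∑' i, ‖gapDerivTerm z (i + (n + 1))‖ ≤ (100 : ℝ) ^ n / 99 := by
  have hz1 : ‖z‖ < 1 := hz.trans_lt (by linarith [show 0 < ((100 : ℝ) ^ n)⁻¹ by positivity])
  have hgeom := (summable_geometric_of_lt_one (by norm_num : (0 : ℝ) ≤ 1 / 100)
    (by norm_num)).mul_left ((100 : ℝ) ^ n / 100)
  calc ∑' i, ‖gapDerivTerm z (i + (n + 1))‖
      ≤ ∑' i : ℕ, (100 : ℝ) ^ n / 100 * (1 / 100) ^ i :=
        Summable.tsum_le_tsum (norm_gapDerivTerm_add_le hz)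
          (summable_norm_gapDerivTerm_add hz1 _) hgeom
    _ = (100 : ℝ) ^ n / 99 := by
        rw [tsum_mul_left, tsum_geometric_of_lt_one (by norm_num) (by norm_num)]
        ring

lemma div_four_le_norm_tsum_gapDerivTerm (h₁ : 1 - ((100 : ℝ) ^ n)⁻¹ ≤ ‖z‖)
    (h₂ : ‖z‖ ≤ 1 - ((100 : ℝ) ^ n)⁻¹ / 2) :
    (100 : ℝ) ^ n / 4 ≤ ‖∑' k, gapDerivTerm z k‖ := by
  have hz1 : ‖z‖ < 1 := h₂.trans_lt (by linarith [show 0 < ((100 : ℝ) ^ n)⁻¹ by positivity])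
  have hsplit := (summable_norm_gapDerivTerm hz1).of_norm.sum_add_tsum_nat_add (n + 1)
  rw [Finset.sum_range_succ] at hsplit
  have hmain : gapDerivTerm z n = ∑' k, gapDerivTerm z k
      - ∑ k ∈ Finset.range n, gapDerivTerm z k - ∑' i, gapDerivTerm z (i + (n + 1)) := by
    rw [← hsplit]
    ring
  have htri : ‖gapDerivTerm z n‖ ≤ ‖∑' k, gapDerivTerm z k‖
      + ∑ k ∈ Finset.range n, ‖gapDerivTerm z k‖ + ∑' i, ‖gapDerivTerm z (i + (n + 1))‖ := by
    rw [hmain]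
    refine (norm_sub_le _ _).trans (add_le_add ((norm_sub_le _ _).trans ?_) ?_)
    · exact add_le_add le_rfl (norm_sum_le _ _)
    · exact norm_tsum_le_tsum_norm (summable_norm_gapDerivTerm_add hz1 _)
  linarith [div_three_le_norm_gapDerivTerm h₁, sum_range_norm_gapDerivTerm_le (n := n) hz1.le,
    tsum_norm_gapDerivTerm_add_le h₂, show (0 : ℝ) ≤ 100 ^ n by positivity]

lemma one_eighth_lt_norm_deriv_gapSeries_mul (h₁ : 1 - ((100 : ℝ) ^ n)⁻¹ < ‖z‖)
    (h₂ : ‖z‖ < 1 - ((100 : ℝ) ^ n)⁻¹ / 2) :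
    1 / 8 < ‖deriv gapSeries z‖ * (1 - ‖z‖) := by
  have hN : (0 : ℝ) < 100 ^ n := by positivity
  rw [deriv_gapSeries (h₂.trans_le (by linarith [inv_pos.mpr hN]))]
  calc (1 : ℝ) / 8 = (100 : ℝ) ^ n / 4 * (((100 : ℝ) ^ n)⁻¹ / 2) := by field_simp; norm_num
    _ < (100 : ℝ) ^ n / 4 * (1 - ‖z‖) := by gcongr; linarith
    _ ≤ ‖∑' k, gapDerivTerm z k‖ * (1 - ‖z‖) := by
        gcongr
        · linarith
        · exact div_four_le_norm_tsum_gapDerivTerm h₁.le h₂.le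

end LowerBound

lemma ofReal_mul_mA_pDisc_le_mA_inter_pDisc {α : ℂ} (hα : α ∈ unitDisc) :
    ENNReal.ofReal ((400 * 1998 : ℝ) ^ 2)⁻¹ * mA (pDisc α (999 / 1000)) ≤
      mA ({z ∈ unitDisc | 1 / 8 < ‖deriv gapSeries z‖ * (1 - ‖z‖)} ∩ pDisc α (999 / 1000)) := by
  rw [mem_unitDisc] at hα
  have hρ0 : 0 < 1 - ‖α‖ := by linarith
  obtain ⟨n, hn₁, hn₂⟩ := exists_nat_pow_near_of_lt_one hρ0 (by linarith [norm_nonneg α])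
    (by norm_num : (0 : ℝ) < 100⁻¹) (by norm_num)
  rw [inv_pow] at hn₁ hn₂
  have hp : 1 - ‖α‖ ≤ 100 * ((100 : ℝ) ^ (n + 1))⁻¹ := by
    rwa [pow_succ', mul_inv, mul_inv_cancel_left₀ (by norm_num)]
  obtain ⟨z₀, hz₀⟩ := exists_ball_subset_annulus_inter_pDisc hα hn₁ hp
  have hball : Metric.ball z₀ (((100 : ℝ) ^ (n + 1))⁻¹ / 4) ⊆
      {z ∈ unitDisc | 1 / 8 < ‖deriv gapSeries z‖ * (1 - ‖z‖)} ∩ pDisc α (999 / 1000) := by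
    intro z hz
    obtain ⟨⟨h₁, h₂⟩, hzΔ⟩ := hz₀ hz
    exact ⟨⟨hzΔ.1, one_eighth_lt_norm_deriv_gapSeries_mul h₁ h₂⟩, hzΔ⟩
  have hΔ : mA (pDisc α (999 / 1000)) ≤ ENNReal.ofReal ((1998 * (1 - ‖α‖)) ^ 2) := by
    rw [← mA_ball α (by positivity)]
    refine measure_mono ((pDisc_subset_ball hα (by norm_num)).trans_eq ?_)
    norm_num
  calc ENNReal.ofReal ((400 * 1998 : ℝ) ^ 2)⁻¹ * mA (pDisc α (999 / 1000))
      ≤ ENNReal.ofReal ((400 * 1998 : ℝ) ^ 2)⁻¹ * ENNReal.ofReal ((1998 * (1 - ‖α‖)) ^ 2) := by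
        gcongr
    _ = ENNReal.ofReal (((1 - ‖α‖) / 400) ^ 2) := by
        rw [← ENNReal.ofReal_mul (by positivity)]
        congr 1
        field_simp
    _ ≤ ENNReal.ofReal ((((100 : ℝ) ^ (n + 1))⁻¹ / 4) ^ 2) :=
        ENNReal.ofReal_le_ofReal (pow_le_pow_left₀ (by positivity) (by linarith) 2)
    _ = mA (Metric.ball z₀ (((100 : ℝ) ^ (n + 1))⁻¹ / 4)) := (mA_ball z₀ (by positivity)).symm
    _ ≤ _ := measure_mono hball

/-- there exists a Bloch function whose level sets
`G_c = {z ∈ 𝔻 : |f'(z)|(1-|z|) > c}` satisfy the pseudohyperbolic density condition. -/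
theorem exists_bloch_with_density :
    ∃ f : ℂ → ℂ, memBloch f ∧
      ∃ c > (0:ℝ), ∃ η ∈ Set.Ioo (0:ℝ) 1, ∃ δ > (0:ℝ), ∀ α ∈ unitDisc,
        ENNReal.ofReal δ * mA (pDisc α η) ≤
          mA ({z ∈ unitDisc | c < ‖deriv f z‖ * (1 - ‖z‖)} ∩
            pDisc α η) :=
  ⟨gapSeries, memBloch_gapSeries, 1 / 8, by norm_num, 999 / 1000, by norm_num, _, by positivity,
    fun _ hα => ofReal_mul_mA_pDisc_le_mA_inter_pDisc hα⟩
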